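/- Translation invariance at stopping times: let ℰ be an F-expectation satisfying (H1), σ a stopping time with values in [0,T], and X ∈ L²(F_T). Then for every Y ∈ L²(F_σ), ℰ[X + Y | F_σ] = ℰ[X | F_σ] + Y almost surely. -/

import Mathlib

open MeasureTheory ProbabilityTheory Set Filter
open scoped ENNReal NNReal RealInnerProductSpace Topology

noncomputable section

/-- A complete probability space `(Ω, m0, P)` carrying a `d`-dimensional standard Brownian
motion `B` with time horizon `T > 0`, together with its (augmented natural) filtration `ℱ` and
an (abstract) Itô stochastic integral `stochInt Z s t = ∫_s^t Z_r dB_r`, characterized by its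
usual properties (additivity, measurability, vanishing conditional expectation, Itô isometry,
and its value on constant integrands). -/
structure BrownianSetting (Ω : Type*) [m0 : MeasurableSpace Ω] (P : Measure Ω)
    (d : ℕ) (T : ℝ) : Type _ where
  prob : IsProbabilityMeasure P
  hT : 0 < T
  ℱ : Filtration ℝ m0
  B : ℝ → Ω → EuclideanSpace ℝ (Fin d)
  B_cont : ∀ ω, Continuous fun t => B t ω
  B_zero : ∀ᵐ ω ∂P, B 0 ω = 0
  B_adapted : Adapted ℱ B
  B_indep : ∀ s t : ℝ, 0 ≤ s → s ≤ t →
    Indep (MeasurableSpace.comap (fun ω => B t ω - B s ω) inferInstance) (ℱ s) P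
  B_gauss : ∀ s t : ℝ, 0 ≤ s → s ≤ t → ∀ u : EuclideanSpace ℝ (Fin d),
    P.map (fun ω => ⟪u, B t ω - B s ω⟫) =
      gaussianReal 0 (Real.toNNReal (‖u‖ ^ 2 * (t - s)))
  stochInt : (ℝ → Ω → EuclideanSpace ℝ (Fin d)) → ℝ → ℝ → Ω → ℝ
  stochInt_add : ∀ Z (s t u : ℝ), s ≤ t → t ≤ u →
    ∀ᵐ ω ∂P, stochInt Z s t ω + stochInt Z t u ω = stochInt Z s u ω
  stochInt_meas : ∀ Z (s t : ℝ), ProgMeasurable ℱ Z →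
    StronglyMeasurable[ℱ t] (stochInt Z s t)
  stochInt_condexp : ∀ Z (s t : ℝ), 0 ≤ s → s ≤ t → ProgMeasurable ℱ Z →
    (∫⁻ ω, (∫⁻ r in Ioc s t, ((‖Z r ω‖₊ : ℝ≥0∞)) ^ 2 ∂volume) ∂P) < ⊤ →
    P[stochInt Z s t|ℱ s] =ᵐ[P] 0
  stochInt_isometry : ∀ Z (s t : ℝ), 0 ≤ s → s ≤ t → ProgMeasurable ℱ Z →
    (∫⁻ ω, ((‖stochInt Z s t ω‖₊ : ℝ≥0∞)) ^ 2 ∂P)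
      = ∫⁻ ω, (∫⁻ r in Ioc s t, ((‖Z r ω‖₊ : ℝ≥0∞)) ^ 2 ∂volume) ∂P
  stochInt_const : ∀ (z : EuclideanSpace ℝ (Fin d)) (s t : ℝ),
    ∀ᵐ ω ∂P, stochInt (fun _ _ => z) s t ω = ⟪z, B t ω - B s ω⟫

variable {Ω : Type*} [m0 : MeasurableSpace Ω] {P : Measure Ω} {d : ℕ} {T : ℝ}

/-- `X ∈ L²(m)`: square-integrable and `m`-measurable. -/
def MemL2 (P : Measure Ω) (m : MeasurableSpace Ω) (X : Ω → ℝ) : Prop :=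
  MemLp X 2 P ∧ StronglyMeasurable[m] X

/-- `X ∈ L^∞(m)`: essentially bounded and `m`-measurable. -/
def MemLinf (P : Measure Ω) (m : MeasurableSpace Ω) (X : Ω → ℝ) : Prop :=
  StronglyMeasurable[m] X ∧ ∃ C : ℝ, ∀ᵐ ω ∂P, |X ω| ≤ C

/-- `φ : [0,∞) → [0,∞)` is continuous, subadditive, increasing, vanishes at `0` and has linear
growth `φ(x) ≤ ν (x + 1)`. -/
structure IsPhi (φ : ℝ → ℝ) (ν : ℝ) : Prop where
  contOn : ContinuousOn φ (Ici 0)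
  nonneg : ∀ x ∈ Ici (0 : ℝ), 0 ≤ φ x
  monoOn : MonotoneOn φ (Ici 0)
  subadd : ∀ x ∈ Ici (0 : ℝ), ∀ y ∈ Ici (0 : ℝ), φ (x + y) ≤ φ x + φ y
  zero : φ 0 = 0
  nu_pos : 0 < ν
  growth : ∀ x ∈ Ici (0 : ℝ), φ x ≤ ν * (x + 1)

/-- `(Y, Z)` is a square-integrable solution (with `Y ∈ S²_F(0,T)`, `Z ∈ L²_F(0,T;ℝ^d)`) of the
BSDE `Y_t = ξ + ∫_t^T h(s, ·, Z_s) ds − ∫_t^T Z_s dB_s`, `t ∈ [0,T]`. -/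
def IsBSDESol (S : BrownianSetting Ω P d T)
    (h : ℝ → Ω → EuclideanSpace ℝ (Fin d) → ℝ) (ξ : Ω → ℝ)
    (Y : ℝ → Ω → ℝ) (Z : ℝ → Ω → EuclideanSpace ℝ (Fin d)) : Prop :=
  Adapted S.ℱ Y ∧ ProgMeasurable S.ℱ Z ∧
  (∀ ω, ContinuousOn (fun t => Y t ω) (Icc 0 T)) ∧
  MemLp (fun ω => ⨆ t ∈ Icc (0 : ℝ) T, |Y t ω|) 2 P ∧
  (∫⁻ ω, (∫⁻ r in Ioc 0 T, ((‖Z r ω‖₊ : ℝ≥0∞)) ^ 2 ∂volume) ∂P) < ⊤ ∧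
  ∀ t ∈ Icc (0 : ℝ) T, ∀ᵐ ω ∂P,
    Y t ω = ξ ω + (∫ s in Ioc t T, h s ω (Z s ω)) - S.stochInt Z t T ω

/-- A filtration-consistent nonlinear expectation (`F`-expectation): a system of operators
`E t : L²(F_T) → L²(F_t)`, `t ∈ [0,T]`, which is monotone, preserves `F_t`-measurable random
variables, is time-consistent, and satisfies the 0-1 law. -/
structure FExpectation (Ω : Type*) [m0 : MeasurableSpace Ω] (P : Measure Ω)
    (T : ℝ) (ℱ : Filtration ℝ m0) where
  E : ℝ → (Ω → ℝ) → Ω → ℝ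
  maps_L2 : ∀ t ∈ Icc (0 : ℝ) T, ∀ X, MemL2 P (ℱ T) X → MemL2 P (ℱ t) (E t X)
  congr : ∀ t ∈ Icc (0 : ℝ) T, ∀ X X' : Ω → ℝ, X =ᵐ[P] X' → E t X =ᵐ[P] E t X'
  mono : ∀ t ∈ Icc (0 : ℝ) T, ∀ X Y : Ω → ℝ, MemL2 P (ℱ T) X → MemL2 P (ℱ T) Y →
    (∀ᵐ ω ∂P, Y ω ≤ X ω) → ∀ᵐ ω ∂P, E t Y ω ≤ E t X ω
  const_pres : ∀ t ∈ Icc (0 : ℝ) T, ∀ X, MemL2 P (ℱ t) X → E t X =ᵐ[P] X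
  tower : ∀ s t : ℝ, 0 ≤ s → s ≤ t → t ≤ T → ∀ X, MemL2 P (ℱ T) X →
    E s (E t X) =ᵐ[P] E s X
  zero_one : ∀ t ∈ Icc (0 : ℝ) T, ∀ X, MemL2 P (ℱ T) X → ∀ A : Set Ω,
    MeasurableSet[ℱ t] A → E t (A.indicator X) =ᵐ[P] A.indicator (E t X)

/-- Condition (H1): the `F`-expectation `ℰ` is dominated by the `g`-expectation `E^φ` with
generator `φ(|z|)`: for all `X, Y ∈ L²(F_T)` and `t ∈ [0,T]`,
`ℰ[X|F_t] − ℰ[Y|F_t] ≤ E^φ[X − Y|F_t]` a.s. -/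
def SatisfiesH1 (S : BrownianSetting Ω P d T) (φ : ℝ → ℝ)
    (ℰ : FExpectation Ω P T S.ℱ) : Prop :=
  ∀ X Y : Ω → ℝ, MemL2 P (S.ℱ T) X → MemL2 P (S.ℱ T) Y →
    ∀ t ∈ Icc (0 : ℝ) T, ∀ Yφ Zφ,
      IsBSDESol S (fun _ _ z => φ ‖z‖) (fun ω => X ω - Y ω) Yφ Zφ →
      ∀ᵐ ω ∂P, ℰ.E t X ω - ℰ.E t Y ω ≤ Yφ t ω

/-- A real function is RCLL (right-continuous with left limits) on `[a,b]`. -/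
def IsRCLLOn (f : ℝ → ℝ) (a b : ℝ) : Prop :=
  (∀ t ∈ Ico a b, ContinuousWithinAt f (Ici t) t) ∧
  (∀ t ∈ Ioc a b, ∃ l : ℝ, Tendsto f (𝓝[<] t) (𝓝 l))

/-- `Y` is an `ℰ`-supermartingale on `[0,T]`. -/
def IsESupermartingale (S : BrownianSetting Ω P d T) (ℰ : FExpectation Ω P T S.ℱ)
    (Y : ℝ → Ω → ℝ) : Prop :=
  (∀ t ∈ Icc (0 : ℝ) T, MemL2 P (S.ℱ t) (Y t)) ∧
  ∀ s t : ℝ, 0 ≤ s → s ≤ t → t ≤ T → ∀ᵐ ω ∂P, ℰ.E s (Y t) ω ≤ Y s ω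

/-- `Y` is an `ℰ`-submartingale on `[0,T]`. -/
def IsESubmartingale (S : BrownianSetting Ω P d T) (ℰ : FExpectation Ω P T S.ℱ)
    (Y : ℝ → Ω → ℝ) : Prop :=
  (∀ t ∈ Icc (0 : ℝ) T, MemL2 P (S.ℱ t) (Y t)) ∧
  ∀ s t : ℝ, 0 ≤ s → s ≤ t → t ≤ T → ∀ᵐ ω ∂P, Y s ω ≤ ℰ.E s (Y t) ω

/-- `Y` is an `ℰ`-martingale on `[0,T]`. -/
def IsEMartingale (S : BrownianSetting Ω P d T) (ℰ : FExpectation Ω P T S.ℱ)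
    (Y : ℝ → Ω → ℝ) : Prop :=
  (∀ t ∈ Icc (0 : ℝ) T, MemL2 P (S.ℱ t) (Y t)) ∧
  ∀ s t : ℝ, 0 ≤ s → s ≤ t → t ≤ T → ∀ᵐ ω ∂P, ℰ.E s (Y t) ω = Y s ω

/-- `y` solves the BSDE `ℰ(f,T,X,z)` under the `F`-expectation `ℰ`:
`y_t + z·B_t = ℰ[X + z·B_T + ∫_t^T f(s, y_s) ds | F_t]` for all `t ∈ [0,T]`,
with `y` continuous and adapted. -/
def SolvesEBSDE (S : BrownianSetting Ω P d T) (ℰ : FExpectation Ω P T S.ℱ)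
    (f : ℝ → Ω → ℝ → ℝ) (X : Ω → ℝ) (z : EuclideanSpace ℝ (Fin d))
    (y : ℝ → Ω → ℝ) : Prop :=
  Adapted S.ℱ y ∧ (∀ ω, ContinuousOn (fun t => y t ω) (Icc 0 T)) ∧
  ∀ t ∈ Icc (0 : ℝ) T, ∀ᵐ ω ∂P,
    y t ω + ⟪z, S.B t ω⟫ =
      ℰ.E t (fun ω' => X ω' + ⟪z, S.B T ω'⟫ + ∫ s in Ioc t T, f s ω' (y s ω')) ω

/-- `y ∈ S^∞_F(0,T)`-type uniform bound. -/
def BddUnif (P : Measure Ω) (T : ℝ) (y : ℝ → Ω → ℝ) : Prop :=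
  ∃ C : ℝ, ∀ t ∈ Icc (0 : ℝ) T, ∀ᵐ ω ∂P, |y t ω| ≤ C

/-- `(g, Z) ∈ L²_F(0,T) × L²_F(0,T;ℝ^d)` represents the `ℰ`-martingale `t ↦ ℰ[X|F_t]`:
`|g_t| ≤ φ(|Z_t|)` and `ℰ[X|F_t] = X + ∫_t^T g_s ds − ∫_t^T Z_s dB_s`. -/
def RepPair (S : BrownianSetting Ω P d T) (ℰ : FExpectation Ω P T S.ℱ) (φ : ℝ → ℝ)
    (X : Ω → ℝ) (g : ℝ → Ω → ℝ) (Z : ℝ → Ω → EuclideanSpace ℝ (Fin d)) : Prop :=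
  ProgMeasurable S.ℱ g ∧ ProgMeasurable S.ℱ Z ∧
  (∫⁻ ω, (∫⁻ r in Ioc 0 T, ((‖g r ω‖₊ : ℝ≥0∞)) ^ 2 ∂volume) ∂P) < ⊤ ∧
  (∫⁻ ω, (∫⁻ r in Ioc 0 T, ((‖Z r ω‖₊ : ℝ≥0∞)) ^ 2 ∂volume) ∂P) < ⊤ ∧
  (∀ᵐ r ∂volume.restrict (Ioc (0 : ℝ) T), ∀ᵐ ω ∂P, |g r ω| ≤ φ ‖Z r ω‖) ∧
  ∀ t ∈ Icc (0 : ℝ) T, ∀ᵐ ω ∂P,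
    ℰ.E t X ω = X ω + (∫ s in Ioc t T, g s ω) - S.stochInt Z t T ω

/-! Applied to the constant solutions of the `φ`-BSDE (which exist because `φ 0 = 0`), (H1) shows
that `ℰ[·|F_t]` commutes with adding constants. By the 0-1 law it then commutes with adding
countably-valued `F_t`-measurable variables, and since monotonicity and constant translation make
it 1-Lipschitz for the uniform distance, with adding any `F_t`-measurable variable.
On `{σ ≤ t}` an `F_σ`-measurable `Y` is `F_t`-measurable, so the identity holds at the
countably-valued times `τ_n = min (⌈σ (n + 1)⌉ / (n + 1)) T ≥ σ`; as `τ_n → σ` from above,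
right continuity of the RCLL versions carries it over to `σ`. -/

theorem isBSDESol_const (S : BrownianSetting Ω P d T) {φ : ℝ → ℝ} (hφ0 : φ 0 = 0)
    {ξ : Ω → ℝ} (c : ℝ) (hξ : ∀ ω, ξ ω = c) :
    IsBSDESol S (fun _ _ z => φ ‖z‖) ξ (fun _ _ => c) (fun _ _ => 0) := by
  have := S.prob
  refine ⟨fun _ => measurable_const, isStronglyProgressive_const _ _,
    fun _ => continuousOn_const, memLp_const _, by simp, fun t _ => ?_⟩
  filter_upwards [S.stochInt_const 0 t T] with ω hω
  simp [hξ ω, hω, hφ0]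

namespace MemL2

variable {α : Type*} {m m' mα : MeasurableSpace α} {μ : Measure α} {X W : α → ℝ}

theorem add (hX : MemL2 μ m X) (hW : MemL2 μ m W) : MemL2 μ m (fun ω => X ω + W ω) :=
  ⟨hX.1.add hW.1, hX.2.add hW.2⟩

theorem mono (hX : MemL2 μ m X) (hm : m ≤ m') : MemL2 μ m' X :=
  ⟨hX.1, hX.2.mono hm⟩

theorem const [IsFiniteMeasure μ] (c : ℝ) : MemL2 μ m (fun _ => c) :=
  ⟨memLp_const c, stronglyMeasurable_const⟩

theorem of_abs_sub_le [IsFiniteMeasure μ] (hW : MemL2 μ m W) (hm : m ≤ mα)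
    (hX : StronglyMeasurable[m] X) {C : ℝ} (hXW : ∀ ω, |X ω - W ω| ≤ C) : MemL2 μ m X := by
  refine ⟨?_, hX⟩
  have hdiff : MemLp (fun ω => X ω - W ω) 2 μ :=
    MemLp.of_bound ((hX.mono hm).sub (hW.2.mono hm)).aestronglyMeasurable C
      (Eventually.of_forall hXW)
  convert hW.1.add hdiff using 1
  funext ω
  simp

end MemL2

def gridCeil (n : ℕ) (x : ℝ) : ℝ := ⌈x * (n + 1)⌉ / (n + 1)

section gridCeil

variable (n : ℕ) (x : ℝ)

theorem le_gridCeil : x ≤ gridCeil n x := by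
  rw [gridCeil, le_div_iff₀ (by positivity)]
  exact Int.le_ceil _

theorem gridCeil_lt : gridCeil n x < x + 1 / (n + 1) := by
  rw [gridCeil, div_lt_iff₀ (by positivity), add_mul, one_div_mul_cancel (by positivity)]
  exact Int.ceil_lt_add_one _

theorem abs_gridCeil_sub_le : |gridCeil n x - x| ≤ 1 / (n + 1) := by
  rw [abs_sub_le_iff]
  have := one_div_pos.2 (n.cast_add_one_pos (α := ℝ))
  constructor <;> linarith [le_gridCeil n x, gridCeil_lt n x]

theorem measurable_gridCeil : Measurable (gridCeil n) :=
  (measurable_from_top.comp (measurable_id.mul_const _).ceil).div_const _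

theorem countable_range_gridCeil : (range (gridCeil n)).Countable :=
  (countable_range fun k : ℤ => (k : ℝ) / (n + 1)).mono (by rintro _ ⟨x, rfl⟩; exact ⟨_, rfl⟩)

theorem tendsto_gridCeil : Tendsto (fun n => gridCeil n x) atTop (𝓝 x) := by
  refine tendsto_of_tendsto_of_tendsto_of_le_of_le tendsto_const_nhds ?_ (le_gridCeil · x)
    (fun n => (gridCeil_lt n x).le)
  simpa using tendsto_one_div_add_atTop_nhds_zero_nat.const_add x

end gridCeil

theorem ae_of_forall_ae_fiber {α β : Type*} [MeasurableSpace α] {μ : Measure α} {f : α → β}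
    (hf : (range f).Countable) {p : α → Prop} (h : ∀ c ∈ range f, ∀ᵐ x ∂μ, f x = c → p x) :
    ∀ᵐ x ∂μ, p x := by
  filter_upwards [(ae_ball_iff hf).2 h] with x hx using hx (f x) (mem_range_self x) rfl

theorem IsRCLLOn.continuousWithinAt_Icc {f : ℝ → ℝ} {a b t : ℝ} (hf : IsRCLLOn f a b)
    (ht : t ∈ Icc a b) : ContinuousWithinAt f (Icc t b) t := by
  rcases ht.2.eq_or_lt with rfl | htb
  · simp [continuousWithinAt_singleton]
  · exact (hf.1 t ⟨ht.1, htb⟩).mono Icc_subset_Ici_self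

theorem MeasureTheory.IsStoppingTime.stronglyMeasurable_indicator_le {ι β : Type*}
    [LinearOrder ι] [TopologicalSpace β] [Zero β] {f : Filtration ι m0} {τ : Ω → WithTop ι}
    (hτ : IsStoppingTime f τ) {Y : Ω → β} (hY : StronglyMeasurable[hτ.measurableSpace] Y)
    (i : ι) : StronglyMeasurable[f i] ({ω | τ ω ≤ i}.indicator Y) :=
  (hY.indicator (hτ.measurableSet_le' i)).stronglyMeasurable_of_measurableSpace_le_on
    (hτ.measurableSet_le' i)
    (fun s hs => by have := hs.2 i; rwa [inter_right_comm, inter_self] at this)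
    (fun _ hω => indicator_of_notMem hω Y)

namespace FExpectation

variable {ℱ : Filtration ℝ m0} (ℰ : FExpectation Ω P T ℱ)

theorem ae_eq_on_of_eqOn {t : ℝ} (ht : t ∈ Icc 0 T) {ξ η : Ω → ℝ} (hξ : MemL2 P (ℱ T) ξ)
    (hη : MemL2 P (ℱ T) η) {A : Set Ω} (hA : MeasurableSet[ℱ t] A) (hξη : EqOn ξ η A) :
    ∀ᵐ ω ∂P, ω ∈ A → ℰ.E t ξ ω = ℰ.E t η ω := by
  filter_upwards [ℰ.zero_one t ht ξ hξ A hA, ℰ.zero_one t ht η hη A hA] with ω hξA hηA hω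
  rw [indicator_congr hξη] at hξA
  simpa [indicator_of_mem hω] using hξA.symm.trans hηA

def ConstTranslationInvariant : Prop :=
  ∀ t ∈ Icc (0 : ℝ) T, ∀ X, MemL2 P (ℱ T) X → ∀ c : ℝ,
    ℰ.E t (fun ω => X ω + c) =ᵐ[P] fun ω => ℰ.E t X ω + c

namespace ConstTranslationInvariant

variable {ℰ} [IsFiniteMeasure P] (h : ℰ.ConstTranslationInvariant)
  {t : ℝ} (ht : t ∈ Icc 0 T) {X : Ω → ℝ} (hX : MemL2 P (ℱ T) X)
include h ht

theorem abs_sub_le {ξ η : Ω → ℝ} (hξ : MemL2 P (ℱ T) ξ) (hη : MemL2 P (ℱ T) η) {c : ℝ}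
    (hc : ∀ᵐ ω ∂P, |ξ ω - η ω| ≤ c) : ∀ᵐ ω ∂P, |ℰ.E t ξ ω - ℰ.E t η ω| ≤ c := by
  have hle (ξ η) (hξ : MemL2 P (ℱ T) ξ) (hη : MemL2 P (ℱ T) η)
      (hc : ∀ᵐ ω ∂P, |ξ ω - η ω| ≤ c) : ∀ᵐ ω ∂P, ℰ.E t ξ ω ≤ ℰ.E t η ω + c := by
    filter_upwards [ℰ.mono t ht _ ξ (hη.add (.const c)) hξ
      (hc.mono fun ω hω => by linarith [le_abs_self (ξ ω - η ω)]), h t ht η hη c] with ω h₁ h₂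
    rwa [← h₂]
  filter_upwards [hle ξ η hξ hη hc, hle η ξ hη hξ (hc.mono fun ω hω => by rwa [abs_sub_comm])]
    with ω h₁ h₂
  rw [abs_sub_le_iff]
  constructor <;> linarith

include hX

theorem add_ae_eq_of_countable_range {W : Ω → ℝ} (hW : MemL2 P (ℱ t) W)
    (hWc : (range W).Countable) :
    ℰ.E t (fun ω => X ω + W ω) =ᵐ[P] fun ω => ℰ.E t X ω + W ω :=
  ae_of_forall_ae_fiber hWc fun c _ => by
    filter_upwards [ℰ.ae_eq_on_of_eqOn ht (hX.add (hW.mono (ℱ.mono ht.2))) (hX.add (.const c))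
      (hW.2.measurable (measurableSet_singleton c)) (fun ω hω => by simp_all),
      h t ht X hX c] with ω h₁ h₂ hω
    rw [h₁ hω, h₂, hω]

theorem add_ae_eq {W : Ω → ℝ} (hW : MemL2 P (ℱ t) W) :
    ℰ.E t (fun ω => X ω + W ω) =ᵐ[P] fun ω => ℰ.E t X ω + W ω := by
  have hWn (n : ℕ) : MemL2 P (ℱ t) (fun ω => gridCeil n (W ω)) :=
    hW.of_abs_sub_le (ℱ.le t) ((measurable_gridCeil n).comp hW.2.measurable).stronglyMeasurable
      fun ω => abs_gridCeil_sub_le n (W ω)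
  have hXW := hX.add (hW.mono (ℱ.mono ht.2))
  have hbound (n : ℕ) : ∀ᵐ ω ∂P,
      |ℰ.E t (fun ω => X ω + W ω) ω - (ℰ.E t X ω + W ω)| ≤ 2 * (1 / (n + 1)) := by
    have hXWn := hX.add ((hWn n).mono (ℱ.mono ht.2))
    filter_upwards [h.abs_sub_le ht hXW hXWn (Eventually.of_forall fun ω => by
        rw [add_sub_add_left_eq_sub, abs_sub_comm]; exact abs_gridCeil_sub_le n (W ω)),
      h.add_ae_eq_of_countable_range ht hX (hWn n)
        ((countable_range_gridCeil n).mono (range_comp_subset_range W (gridCeil n)))] with ω h₁ h₂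
    rw [h₂] at h₁
    have := abs_gridCeil_sub_le n (W ω)
    rw [abs_sub_le_iff] at h₁ this ⊢
    constructor <;> linarith
  filter_upwards [ae_all_iff.2 hbound] with ω hω
  have hlim : Tendsto (fun n : ℕ => 2 * (1 / ((n : ℝ) + 1))) atTop (𝓝 0) := by
    simpa using tendsto_one_div_add_atTop_nhds_zero_nat.const_mul (2 : ℝ)
  rw [← sub_eq_zero, ← abs_nonpos_iff]
  exact ge_of_tendsto' hlim hω

theorem ae_add_eq_of_stoppingTime_le {σ : Ω → ℝ}
    (hσ : IsStoppingTime ℱ (fun ω => (σ ω : WithTop ℝ))) (hσT : ∀ ω, σ ω ≤ T) {Y : Ω → ℝ}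
    (hY : MemLp Y 2 P) (hYσ : StronglyMeasurable[hσ.measurableSpace] Y) :
    ∀ᵐ ω ∂P, σ ω ≤ t → ℰ.E t (fun ω => X ω + Y ω) ω = ℰ.E t X ω + Y ω := by
  have hA : MeasurableSet[ℱ t] {ω | σ ω ≤ t} := by simpa using hσ t
  have hYA : MemL2 P (ℱ t) ({ω | σ ω ≤ t}.indicator Y) :=
    ⟨hY.indicator (ℱ.le t _ hA), by simpa using hσ.stronglyMeasurable_indicator_le hYσ t⟩
  have hYT : MemL2 P (ℱ T) Y :=
    ⟨hY, hYσ.mono (hσ.measurableSpace_le_of_le_const fun ω => WithTop.coe_le_coe.2 (hσT ω))⟩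
  filter_upwards [ℰ.ae_eq_on_of_eqOn ht (hX.add hYT) (hX.add (hYA.mono (ℱ.mono ht.2))) hA
      (fun ω hω => by simp [indicator_of_mem hω]), h.add_ae_eq ht hX hYA] with ω h₁ h₂ hω
  rw [h₁ hω, h₂, indicator_of_mem (s := {ω | σ ω ≤ t}) hω]

end ConstTranslationInvariant

end FExpectation

theorem SatisfiesH1.constTranslationInvariant {S : BrownianSetting Ω P d T} {φ : ℝ → ℝ}
    {ℰ : FExpectation Ω P T S.ℱ} (hH1 : SatisfiesH1 S φ ℰ) (hφ0 : φ 0 = 0) :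
    ℰ.ConstTranslationInvariant := by
  have := S.prob
  intro t ht X hX c
  have hXc := hX.add (.const c)
  have h₁ := hH1 _ X hXc hX t ht _ _ (isBSDESol_const S hφ0 c fun ω => add_sub_cancel_left _ _)
  have h₂ := hH1 X _ hX hXc t ht _ _ (isBSDESol_const S hφ0 (-c) fun ω => sub_add_cancel_left _ _)
  filter_upwards [h₁, h₂] with ω h₁ h₂
  linarith

/-- translation invariance at stopping times:
`ℰ[X + Y|F_σ] = ℰ[X|F_σ] + Y` a.s. for `Y ∈ L²(F_σ)`; here `ℰ[ξ|F_σ] = V_σ` with `V` the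
RCLL version of `t ↦ ℰ[ξ|F_t]`. -/
theorem fexp_translation_invariance_stopping
    {Ω : Type*} [m0 : MeasurableSpace Ω] {P : Measure Ω} {d : ℕ} {T : ℝ}
    (S : BrownianSetting Ω P d T) (φ : ℝ → ℝ) (ν : ℝ) (hφ : IsPhi φ ν)
    (ℰ : FExpectation Ω P T S.ℱ) (hH1 : SatisfiesH1 S φ ℰ)
    (σ : Ω → ℝ) (hσ : IsStoppingTime S.ℱ (fun ω => (σ ω : WithTop ℝ))) (hσT : ∀ ω, σ ω ∈ Icc (0 : ℝ) T)
    (X : Ω → ℝ) (hX : MemL2 P (S.ℱ T) X)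
    (Y : Ω → ℝ) (hY : MemLp Y 2 P) (hYσ : StronglyMeasurable[hσ.measurableSpace] Y)
    (V₁ : ℝ → Ω → ℝ) (hV₁_rcll : ∀ ω, IsRCLLOn (fun t => V₁ t ω) 0 T)
    (hV₁ : ∀ t ∈ Icc (0 : ℝ) T, V₁ t =ᵐ[P] ℰ.E t (fun ω => X ω + Y ω))
    (V₂ : ℝ → Ω → ℝ) (hV₂_rcll : ∀ ω, IsRCLLOn (fun t => V₂ t ω) 0 T)
    (hV₂ : ∀ t ∈ Icc (0 : ℝ) T, V₂ t =ᵐ[P] ℰ.E t X) :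
    ∀ᵐ ω ∂P, V₁ (σ ω) ω = V₂ (σ ω) ω + Y ω := by
  have := S.prob
  have hinv := hH1.constTranslationInvariant hφ.zero
  set τ : ℕ → Ω → ℝ := fun n ω => min (gridCeil n (σ ω)) T
  have hτ_mem (n : ℕ) (ω : Ω) : τ n ω ∈ Icc (σ ω) T :=
    ⟨le_min (le_gridCeil n (σ ω)) (hσT ω).2, min_le_right _ _⟩
  have hτ_countable (n : ℕ) : (range (τ n)).Countable :=
    ((countable_range_gridCeil n).image (min · T)).mono
      (by rintro _ ⟨ω, rfl⟩; exact mem_image_of_mem _ (mem_range_self _))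
  have hτ (n : ℕ) : ∀ᵐ ω ∂P, V₁ (τ n ω) ω = V₂ (τ n ω) ω + Y ω := by
    refine ae_of_forall_ae_fiber (hτ_countable n) fun c ⟨ω₀, hc⟩ => ?_
    have hcT : c ∈ Icc 0 T := hc ▸ ⟨(hσT ω₀).1.trans (hτ_mem n ω₀).1, (hτ_mem n ω₀).2⟩
    filter_upwards [hinv.ae_add_eq_of_stoppingTime_le hcT hX hσ (fun ω => (hσT ω).2) hY hYσ,
      hV₁ c hcT, hV₂ c hcT] with ω h h₁ h₂ hω
    rw [hω, h₁, h₂, h (hω ▸ (hτ_mem n ω).1)]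
  filter_upwards [ae_all_iff.2 hτ] with ω hω
  have hlim : Tendsto (fun n => τ n ω) atTop (𝓝[Icc (σ ω) T] σ ω) :=
    tendsto_nhdsWithin_iff.2 ⟨by simpa [min_eq_left (hσT ω).2] using
      (tendsto_gridCeil (σ ω)).min (tendsto_const_nhds (x := T)),
      Eventually.of_forall (hτ_mem · ω)⟩
  refine tendsto_nhds_unique ?_
    ((((hV₂_rcll ω).continuousWithinAt_Icc (hσT ω)).tendsto.comp hlim).add_const (Y ω))
  simpa only [Function.comp_def, hω] using
    ((hV₁_rcll ω).continuousWithinAt_Icc (hσT ω)).tendsto.comp hlim
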